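/- arXiv:1410.2841 — 2 statements merged into one kernel-verified Lean document; each statement's English description precedes it below -/
import Mathlib

section
/- Let X₀,...,X_N, Y₁,...,Y_N be d×d real symmetric matrices. The complex block Toeplitz matrix Toeplitz(X₀, X₁+iY₁, ..., X_N+iY_N) is positive semidefinite if and only if the real matrix Toeplitz(X₀, X₁, ..., X_N) + Hankel(−Y_N, −Y_{N−1}, ..., −Y₁, 0, Y₁, ..., Y_{N−1}, Y_N) is positive semidefinite. -/
open Matrix ComplexOrder

/-!
Let `J` be the permutation matrix reversing the block order and `U = 1 + iJ`, which is invertible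
since `(1 + iJ)(1 - iJ) = 2`. For symmetric `X n`, `Y n` and `Y 0 = 0`, the `(j, k)` block of the
complex Toeplitz matrix is `f (k - j) + i g (k - j)` with `f n = X |n|` even and
`g n = sgn n • Y |n|` odd. Expanding `Uᴴ T U = T + J T J + i (T J - J T)` blockwise, the parities
make the imaginary parts cancel and leave `2 f (k - j) + 2 g (j + k - N)`, i.e. twice the real
matrix `Toeplitz(X) + Hankel(-Y_N, …, Y_N)`. Congruence by an invertible matrix, complexification
and positive scaling all preserve positive semidefiniteness.
-/

/-- Block Toeplitz matrix with blocks `T 0, T 1, ..., T N` (conjugate-transposed below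
the block diagonal). -/
def blockToeplitz (d N : ℕ) {R : Type*} [CommRing R] [StarRing R]
    (T : ℕ → Matrix (Fin d) (Fin d) R) :
    Matrix (Fin (N + 1) × Fin d) (Fin (N + 1) × Fin d) R :=
  fun p q =>
    if p.1.1 ≤ q.1.1 then T (q.1.1 - p.1.1) p.2 q.2 else (T (p.1.1 - q.1.1))ᴴ p.2 q.2

/-- Block Hankel matrix with blocks `s 1, ..., s (2N+1)`: block `(j,k)` (1-indexed) is
`s (j+k-1)`. -/
def blockHankel (d N : ℕ) {R : Type*} [CommRing R]
    (s : ℕ → Matrix (Fin d) (Fin d) R) :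
    Matrix (Fin (N + 1) × Fin d) (Fin (N + 1) × Fin d) R :=
  fun p q => s (p.1.1 + q.1.1 + 1) p.2 q.2

section Involution

variable {ι : Type*} [Fintype ι] [DecidableEq ι] {σ : Equiv.Perm ι}

local notation "P" => Equiv.Perm.permMatrix ℂ σ

lemma permMatrix_mul_self_of_involutive (hσ : Function.Involutive σ) : P * P = 1 := by
  rw [← permMatrix_mul, show σ * σ = 1 from Equiv.ext hσ, permMatrix_one]

lemma isUnit_one_add_I_smul_permMatrix (hσ : Function.Involutive σ) :
    IsUnit (1 + Complex.I • P) := by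
  have h : (1 + Complex.I • P) * (1 - Complex.I • P) = (2 : ℂ) • 1 := by
    simp only [mul_sub, add_mul, one_mul, mul_one, smul_mul_smul_comm, Complex.I_mul_I,
      permMatrix_mul_self_of_involutive hσ]
    module
  refine IsUnit.of_mul_eq_one ((2⁻¹ : ℂ) • (1 - Complex.I • P)) ?_
  rw [mul_smul_comm, h, smul_smul, inv_mul_cancel₀ two_ne_zero, one_smul]

lemma star_mul_mul_one_add_I_smul_permMatrix (hσ : Function.Involutive σ) (A : Matrix ι ι ℂ) :
    star (1 + Complex.I • P) * A * (1 + Complex.I • P) =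
      of fun p q => A p q + Complex.I * A p (σ q) - Complex.I * A (σ p) q + A (σ p) (σ q) := by
  have hPA (B : Matrix ι ι ℂ) : P * B = B.submatrix σ id := PEquiv.toMatrix_toPEquiv_mul σ B
  have hσ' : σ.symm = σ := Function.Involutive.symm_eq_self_of_involutive σ hσ
  have hAP (B : Matrix ι ι ℂ) : B * P = B.submatrix id σ := by
    rw [PEquiv.mul_toMatrix_toPEquiv, hσ']
  have hstar : star (1 + Complex.I • P) = 1 - Complex.I • P := by
    rw [star_eq_conjTranspose, conjTranspose_add, conjTranspose_smul, conjTranspose_one,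
      conjTranspose_permMatrix, Equiv.Perm.inv_def, hσ', Complex.star_def, Complex.conj_I, neg_smul,
      sub_eq_add_neg]
  have hexpand : (1 - Complex.I • P) * A * (1 + Complex.I • P) =
      A + Complex.I • (A * P) - Complex.I • (P * A) + P * A * P := by
    simp only [sub_mul, mul_add, one_mul, mul_one, smul_mul_assoc, mul_smul_comm,
      Matrix.mul_assoc]
    match_scalars <;> simp
  rw [hstar, hexpand, hPA, hAP, hAP]
  ext p q
  simp

end Involution

lemma posSemidef_map_algebraMap_iff {𝕜 n : Type*} [RCLike 𝕜] [Fintype n] (M : Matrix n n ℝ) :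
    (M.map (algebraMap ℝ 𝕜)).PosSemidef ↔ M.PosSemidef := by
  constructor
  · intro h
    refine posSemidef_iff_dotProduct_mulVec.mpr ⟨?_, fun x => ?_⟩
    · ext i j
      simpa using congr_fun₂ h.1 i j
    · rw [← RCLike.ofReal_nonneg (K := 𝕜)]
      convert h.dotProduct_mulVec_nonneg (fun i => algebraMap ℝ 𝕜 (x i)) using 1
      simp [dotProduct, mulVec]
  · intro h
    obtain ⟨m, v, rfl⟩ := posSemidef_iff_eq_sum_vecMulVec.mp h
    have hmap : (∑ i, vecMulVec (v i) (star (v i))).map (algebraMap ℝ 𝕜) =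
        ∑ i, vecMulVec (algebraMap ℝ 𝕜 ∘ v i) (star (algebraMap ℝ 𝕜 ∘ v i)) := by
      ext a b
      simp [Matrix.sum_apply, vecMulVec_apply]
    rw [hmap]
    exact posSemidef_sum _ fun i _ => posSemidef_vecMulVec_self_star _

lemma posSemidef_smul_iff {𝕜 n : Type*} [RCLike 𝕜] {c : ℝ} (hc : 0 < c) {A : Matrix n n 𝕜} :
    (c • A).PosSemidef ↔ A.PosSemidef :=
  ⟨fun h => by simpa [smul_smul, hc.ne'] using h.smul (inv_nonneg.2 hc.le), fun h => h.smul hc.le⟩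

section Entries

variable {d N : ℕ} {X Y : ℕ → Matrix (Fin d) (Fin d) ℝ}

lemma blockToeplitz_apply_of_isSymm (hX : ∀ n, (X n).IsSymm) (p q : Fin (N + 1) × Fin d) :
    blockToeplitz d N X p q = X ((q.1 : ℤ) - p.1).natAbs p.2 q.2 := by
  obtain ⟨⟨j, hj⟩, a⟩ := p
  obtain ⟨⟨k, hk⟩, b⟩ := q
  simp only [blockToeplitz]
  split_ifs with h
  · rw [show ((k : ℤ) - j).natAbs = k - j by omega]
  · rw [show ((k : ℤ) - j).natAbs = j - k by omega, conjTranspose_apply, star_trivial,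
      (hX _).apply]

lemma blockToeplitz_ofReal_add_I_smul_apply (hX : ∀ n, (X n).IsSymm) (hY : ∀ n, (Y n).IsSymm)
    (hY0 : Y 0 = 0) (p q : Fin (N + 1) × Fin d) :
    blockToeplitz d N (fun n =>
        (X n).map (fun a => (a : ℂ)) + Complex.I • (Y n).map (fun a => (a : ℂ))) p q =
      X ((q.1 : ℤ) - p.1).natAbs p.2 q.2 +
        Complex.I * (((q.1 : ℤ) - p.1).sign * Y ((q.1 : ℤ) - p.1).natAbs p.2 q.2) := by
  obtain ⟨⟨j, hj⟩, a⟩ := p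
  obtain ⟨⟨k, hk⟩, b⟩ := q
  simp only [blockToeplitz]
  rcases lt_trichotomy j k with h | rfl | h
  · rw [if_pos h.le, show ((k : ℤ) - j).natAbs = k - j by omega,
      Int.sign_eq_one_of_pos (by omega)]
    simp
  · simp [hY0]
  · rw [if_neg (by omega), show ((k : ℤ) - j).natAbs = j - k by omega,
      Int.sign_eq_neg_one_of_neg (by omega)]
    simp [(hX _).apply, (hY _).apply, Complex.conj_ofReal]

lemma blockHankel_apply_eq_sign (hY0 : Y 0 = 0) (p q : Fin (N + 1) × Fin d) :
    blockHankel d N (fun m =>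
        if _ : 1 ≤ m ∧ m ≤ N then -(Y (N + 1 - m))
        else if _ : N + 1 ≤ m ∧ m ≤ 2 * N + 1 then Y (m - (N + 1))
        else 0) p q =
      ((p.1 : ℤ) + q.1 - N).sign * Y ((p.1 : ℤ) + q.1 - N).natAbs p.2 q.2 := by
  obtain ⟨⟨j, hj⟩, a⟩ := p
  obtain ⟨⟨k, hk⟩, b⟩ := q
  simp only [blockHankel]
  rcases lt_trichotomy (j + k) N with h | h | h
  · rw [dif_pos (by omega), show ((j : ℤ) + k - N).natAbs = N + 1 - (j + k + 1) by omega,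
      Int.sign_eq_neg_one_of_neg (by omega)]
    simp
  · simp [show (j : ℤ) + k - N = 0 by omega, h, hY0]
  · rw [dif_neg (by omega), dif_pos (by omega),
      show ((j : ℤ) + k - N).natAbs = j + k + 1 - (N + 1) by omega,
      Int.sign_eq_one_of_pos (by omega)]
    simp

end Entries

def blockRev (N d : ℕ) : Equiv.Perm (Fin (N + 1) × Fin d) :=
  Fin.revPerm.prodCongr (Equiv.refl _)

lemma blockRev_involutive (N d : ℕ) : Function.Involutive (blockRev N d) :=
  fun p => Prod.ext (Fin.rev_rev p.1) rfl

lemma star_mul_blockToeplitz_mul_eq {d N : ℕ} {X Y : ℕ → Matrix (Fin d) (Fin d) ℝ}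
    (hX : ∀ n, (X n).IsSymm) (hY : ∀ n, (Y n).IsSymm) (hY0 : Y 0 = 0) :
    star (1 + Complex.I • (blockRev N d).permMatrix ℂ) *
        blockToeplitz d N (fun n =>
          (X n).map (fun a => (a : ℂ)) + Complex.I • (Y n).map (fun a => (a : ℂ))) *
        (1 + Complex.I • (blockRev N d).permMatrix ℂ) =
      ((2 : ℝ) • (blockToeplitz d N X + blockHankel d N (fun m =>
        if _ : 1 ≤ m ∧ m ≤ N then -(Y (N + 1 - m))
        else if _ : N + 1 ≤ m ∧ m ≤ 2 * N + 1 then Y (m - (N + 1))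
        else 0))).map (algebraMap ℝ ℂ) := by
  rw [star_mul_mul_one_add_I_smul_permMatrix (blockRev_involutive N d)]
  ext ⟨⟨j, hj⟩, a⟩ ⟨⟨k, hk⟩, b⟩
  simp only [blockRev, of_apply, map_apply, Matrix.smul_apply, smul_eq_mul, Matrix.add_apply,
    blockToeplitz_ofReal_add_I_smul_apply hX hY hY0, blockToeplitz_apply_of_isSymm hX,
    blockHankel_apply_eq_sign hY0, Equiv.prodCongr_apply, Prod.map, Fin.revPerm_apply,
    Fin.val_rev, Equiv.refl_apply, Complex.coe_algebraMap]
  rw [show ((N + 1 - (k + 1) : ℕ) : ℤ) = N - k by omega,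
    show ((N + 1 - (j + 1) : ℕ) : ℤ) = N - j by omega,
    show (N : ℤ) - k - j = -(j + k - N) by ring, show (k : ℤ) - (N - j) = j + k - N by ring,
    show (N : ℤ) - k - (N - j) = -(k - j) by ring]
  simp only [Int.natAbs_neg, Int.sign_neg, Int.cast_neg]
  push_cast
  ring_nf
  rw [Complex.I_sq]
  ring

/-- `Toeplitz(X₀, X₁+iY₁, ..., X_N+iY_N) ⪰ 0` iff
`Toeplitz(X₀, ..., X_N) + Hankel(−Y_N, ..., −Y₁, 0, Y₁, ..., Y_N) ⪰ 0`. -/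
theorem complex_toeplitz_psd_iff_real (d N : ℕ)
    (X Y : ℕ → Matrix (Fin d) (Fin d) ℝ)
    (hX : ∀ n, (X n).IsSymm) (hY : ∀ n, (Y n).IsSymm) (hY0 : Y 0 = 0) :
    (blockToeplitz d N (fun n =>
        (X n).map (fun a => (a : ℂ)) + Complex.I • (Y n).map (fun a => (a : ℂ)))).PosSemidef ↔
      (blockToeplitz d N X + blockHankel d N (fun m =>
        if h : 1 ≤ m ∧ m ≤ N then -(Y (N + 1 - m))
        else if h2 : N + 1 ≤ m ∧ m ≤ 2 * N + 1 then Y (m - (N + 1))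
        else 0)).PosSemidef := by
  have hU := isUnit_one_add_I_smul_permMatrix (blockRev_involutive N d)
  rw [← hU.posSemidef_star_left_conjugate_iff, star_mul_blockToeplitz_mul_eq hX hY hY0,
    posSemidef_map_algebraMap_iff, posSemidef_smul_iff two_pos]
end

section
/- Let Z_ℝ = [[Re Z, Im Z], [−Im Z, Re Z]] with Re Z symmetric and Im Z skew-symmetric satisfying J(Re Z)J = Re Z and J(Im Z)+(Im Z)J = 0 for an orthogonal symmetric involution J. Then with Q = (1/√2)[[I, −J],[J, I]], one has Q Z_ℝ Qᵀ = [[Re Z + J Im Z, 0],[0, Re Z + J Im Z]]; consequently Z_ℝ ⪰ 0 if and only if Re Z + J Im Z ⪰ 0. -/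
/-!
Conjugating by `Q₀ = [[1, -J], [J, 1]]` doubles the block matrix into `2 • diag(R + JS, R + JS)`:
the off-diagonal blocks cancel because `J` commutes with `R` and anticommutes with `S`.
Since `J` is a symmetric involution, `Q₀ Q₀ᵀ = 2`, so `Q = Q₀ / √2` is orthogonal; conjugation by an
invertible matrix preserves positive semidefiniteness, and a block-diagonal matrix is positive
semidefinite iff its diagonal blocks are.
-/

open Matrix

namespace Matrix

theorem posSemidef_fromBlocks_zero_zero_iff {m n R : Type*} [Fintype m] [Fintype n] [Ring R]
    [PartialOrder R] [StarRing R] [AddLeftMono R] {A : Matrix m m R} {D : Matrix n n R} :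
    (fromBlocks A 0 0 D).PosSemidef ↔ A.PosSemidef ∧ D.PosSemidef := by
  refine ⟨fun h => ⟨h.submatrix Sum.inl, h.submatrix Sum.inr⟩, fun ⟨hA, hD⟩ => ?_⟩
  rw [posSemidef_iff_dotProduct_mulVec]
  refine ⟨hA.isHermitian.fromBlocks (by simp) hD.isHermitian, fun x => ?_⟩
  rw [← Sum.elim_comp_inl_inr x, fromBlocks_mulVec]
  simp only [Sum.elim_comp_inl, Sum.elim_comp_inr, zero_mulVec, add_zero, zero_add,
    Function.star_sumElim, sumElim_dotProduct_sumElim]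
  exact add_nonneg (hA.dotProduct_mulVec_nonneg _) (hD.dotProduct_mulVec_nonneg _)

section Rotation

variable {n α : Type*} [Fintype n] [DecidableEq n] [Ring α] {J : Matrix n n α}

theorem fromBlocks_one_neg_mul_fromBlocks_one (hJ : J * J = 1) :
    fromBlocks 1 (-J) J 1 * fromBlocks 1 J (-J) 1 = (2 : α) • (1 : Matrix (n ⊕ n) (n ⊕ n) α) := by
  rw [fromBlocks_multiply, ← fromBlocks_one, fromBlocks_smul]
  simp [hJ, two_smul]

theorem fromBlocks_one_neg_mul_fromBlocks_mul_fromBlocks_one {R S : Matrix n n α}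
    (hJ : J * J = 1) (hJR : J * R * J = R) (hJS : J * S = -(S * J)) :
    fromBlocks 1 (-J) J 1 * fromBlocks R S (-S) R * fromBlocks 1 J (-J) 1 =
      (2 : α) • fromBlocks (R + J * S) 0 0 (R + J * S) := by
  have hSJ : S * J = -(J * S) := by rw [hJS, neg_neg]
  have hRJ : R * J = J * R := by conv_lhs => rw [← hJR, mul_assoc, hJ, mul_one]
  have hJSJ : J * S * J = -S := by rw [hJS, neg_mul, mul_assoc, hJ, mul_one]
  rw [fromBlocks_multiply, fromBlocks_multiply, fromBlocks_smul, smul_zero, two_smul]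
  simp only [one_mul, mul_one, neg_mul, mul_neg, neg_neg, add_mul, hJR, hSJ, hRJ, hJSJ]
  congr 1 <;> abel

end Rotation

end Matrix

theorem rotate_block_matrix_general (n : ℕ) (J R S : Matrix (Fin n) (Fin n) ℝ)
    (hJsymm : Jᵀ = J) (hJinv : J * J = 1)
    (hJR : J * R * J = R) (hJS : J * S = -(S * J)) :
    ((1 / Real.sqrt 2) • Matrix.fromBlocks (1 : Matrix (Fin n) (Fin n) ℝ) (-J) J 1) *
        Matrix.fromBlocks R S (-S) R *
        ((1 / Real.sqrt 2) • Matrix.fromBlocks (1 : Matrix (Fin n) (Fin n) ℝ) (-J) J 1)ᵀ =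
      Matrix.fromBlocks (R + J * S) 0 0 (R + J * S) ∧
    ((Matrix.fromBlocks R S (-S) R).PosSemidef ↔ (R + J * S).PosSemidef) := by
  have hc : 1 / Real.sqrt 2 * (1 / Real.sqrt 2) = 1 / 2 := by
    rw [div_mul_div_comm, one_mul, Real.mul_self_sqrt zero_le_two]
  have hQ₀t : (fromBlocks (1 : Matrix (Fin n) (Fin n) ℝ) (-J) J 1)ᵀ = fromBlocks 1 J (-J) 1 := by
    simp [fromBlocks_transpose, hJsymm]
  set Q := (1 / Real.sqrt 2) • fromBlocks (1 : Matrix (Fin n) (Fin n) ℝ) (-J) J 1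
  have hQt : Qᵀ = (1 / Real.sqrt 2) • fromBlocks 1 J (-J) 1 := by rw [transpose_smul, hQ₀t]
  have hQ : Q * Qᵀ = 1 := by
    rw [hQt, smul_mul_smul_comm, hc, fromBlocks_one_neg_mul_fromBlocks_one hJinv, smul_smul]
    norm_num
  have hconj : Q * fromBlocks R S (-S) R * Qᵀ = fromBlocks (R + J * S) 0 0 (R + J * S) := by
    rw [hQt, smul_mul_assoc, smul_mul_smul_comm, hc,
      fromBlocks_one_neg_mul_fromBlocks_mul_fromBlocks_one hJinv hJR hJS, smul_smul]
    norm_num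
  have hQunit : IsUnit Q := (isUnit_iff_isUnit_det Q).2 (isUnit_det_of_right_inverse hQ)
  refine ⟨hconj, ?_⟩
  rw [← hQunit.posSemidef_star_right_conjugate_iff, star_eq_conjTranspose,
    conjTranspose_eq_transpose_of_trivial, hconj, posSemidef_fromBlocks_zero_zero_iff, and_self]

/-- if `J` is an orthogonal symmetric involution, `R` is symmetric with
`JRJ = R`, and `S` is skew-symmetric with `JS = −SJ`, then with
`Q = (1/√2)[[I, −J],[J, I]]` and `Z_ℝ = [[R, S],[−S, R]]` one has
`Q Z_ℝ Qᵀ = [[R + JS, 0],[0, R + JS]]`; consequently `Z_ℝ ⪰ 0` iff `R + JS ⪰ 0`. -/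
theorem rotate_block_matrix (n : ℕ) (J R S : Matrix (Fin n) (Fin n) ℝ)
    (hJsymm : Jᵀ = J) (hJinv : J * J = 1) (hR : Rᵀ = R) (hS : Sᵀ = -S)
    (hJR : J * R * J = R) (hJS : J * S = -(S * J)) :
    ((1 / Real.sqrt 2) • Matrix.fromBlocks (1 : Matrix (Fin n) (Fin n) ℝ) (-J) J 1) *
        Matrix.fromBlocks R S (-S) R *
        ((1 / Real.sqrt 2) • Matrix.fromBlocks (1 : Matrix (Fin n) (Fin n) ℝ) (-J) J 1)ᵀ =
      Matrix.fromBlocks (R + J * S) 0 0 (R + J * S) ∧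
    ((Matrix.fromBlocks R S (-S) R).PosSemidef ↔ (R + J * S).PosSemidef) :=
  rotate_block_matrix_general n J R S hJsymm hJinv hJR hJS
end
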